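/- arXiv:0801.2242 — 2 statements merged into one kernel-verified Lean document; each statement's English description precedes it below -/
import Mathlib

section
/- Let X and Y be finite sets, V : X → PMF(Y) a channel, and Φ = (N, φ, {D_i}) a code with encoder φ : {1,…,N} → X and pairwise disjoint decoding sets D_i ⊆ Y, with average error probability P_e(Φ) = (1/N) Σ_{i=1}^N (1 − V_{φ(i)}(D_i)). Then for every probability distribution Q on Y and every a > 0, 1 − P_e(Φ) ≤ a/N + (1/N) Σ_{i=1}^N V_{φ(i)}{ y : V_{φ(i)}(y) ≥ a·Q(y) }. -/
open scoped BigOperators Classical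

def IsDist {Z : Type} [Fintype Z] (P : Z → ℝ) : Prop :=
  (∀ z, 0 ≤ P z) ∧ ∑ z, P z = 1

def IsChannel {A B : Type} [Fintype B] (V : A → B → ℝ) : Prop := ∀ x, IsDist (V x)

/-! Split each decoding set `D i` according to whether `V_{φ(i)}(y) ≥ a Q(y)`. On the part where
this fails, `V_{φ(i)}` is dominated by `a Q`, and since the `D i` are disjoint these parts carry
total `Q`-mass at most `1`; the rest lies inside `{y : V_{φ(i)}(y) ≥ a Q(y)}`. -/

open Finset

lemma sum_le_mul_sum_add_sum_filter {Y : Type} [Fintype Y] (s : Finset Y) (f g : Y → ℝ)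
    (hf : ∀ y, 0 ≤ f y) (c : ℝ) (hcg : ∀ y ∈ s, 0 ≤ c * g y) :
    ∑ y ∈ s, f y ≤
      c * ∑ y ∈ s, g y + ∑ y ∈ univ.filter (fun y => c * g y ≤ f y), f y := by
  rw [← sum_filter_add_sum_filter_not s (fun y => c * g y ≤ f y), add_comm]
  refine add_le_add ?_ ?_
  · calc ∑ y ∈ s.filter (fun y => ¬ c * g y ≤ f y), f y
        ≤ ∑ y ∈ s.filter (fun y => ¬ c * g y ≤ f y), c * g y :=
          sum_le_sum fun y hy => (not_le.mp (mem_filter.mp hy).2).le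
      _ ≤ ∑ y ∈ s, c * g y :=
          sum_le_sum_of_subset_of_nonneg (filter_subset _ _) fun y hy _ => hcg y hy
      _ = c * ∑ y ∈ s, g y := (mul_sum _ _ _).symm
  · exact sum_le_sum_of_subset_of_nonneg
      (filter_subset_filter (fun y => c * g y ≤ f y) (subset_univ s)) fun y _ _ => hf y

lemma sum_sum_le_sum_of_pairwise_disjoint {ι Y : Type} [Fintype ι] [Fintype Y]
    (D : ι → Finset Y) (hD : ∀ i j, i ≠ j → Disjoint (D i) (D j)) (Q : Y → ℝ)
    (hQ : ∀ y, 0 ≤ Q y) :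
    ∑ i, ∑ y ∈ D i, Q y ≤ ∑ y, Q y := by
  rw [← sum_biUnion fun i _ j _ hij => hD i j hij]
  exact sum_le_univ_sum_of_nonneg hQ

lemma one_sub_average_one_sub {ι : Type} [Fintype ι] [Nonempty ι] (p : ι → ℝ) :
    1 - (1 / (Fintype.card ι : ℝ)) * ∑ i, (1 - p i) =
      (1 / (Fintype.card ι : ℝ)) * ∑ i, p i := by
  have : (Fintype.card ι : ℝ) ≠ 0 := by positivity
  rw [sum_sub_distrib, sum_const, card_univ, nsmul_eq_mul, mul_one]
  field_simp
  ring

/-- Single-shot converse bound: for a code `(N, φ, {D_i})` with pairwise disjoint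
decoding sets, any output distribution `Q` and any `a > 0`,
`1 − Pₑ(Φ) ≤ a/N + (1/N) Σᵢ V_{φ(i)}{ y : V_{φ(i)}(y) ≥ a Q(y) }`. -/
theorem single_shot_converse
    {X Y : Type} [Fintype X] [Fintype Y]
    (V : X → Y → ℝ) (hV : IsChannel V)
    (N : ℕ) (hN : 0 < N)
    (φ : Fin N → X) (D : Fin N → Finset Y)
    (hdisj : ∀ i j : Fin N, i ≠ j → Disjoint (D i) (D j))
    (Q : Y → ℝ) (hQ : IsDist Q)
    (a : ℝ) (ha : 0 < a) :
    1 - (1 / (N : ℝ)) * ∑ i, (1 - ∑ y ∈ D i, V (φ i) y) ≤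
      a / N + (1 / (N : ℝ)) *
        ∑ i, ∑ y ∈ Finset.univ.filter (fun y => a * Q y ≤ V (φ i) y), V (φ i) y := by
  have : NeZero N := ⟨hN.ne'⟩
  have hsplit := fun i => sum_le_mul_sum_add_sum_filter (D i) (V (φ i)) Q (hV (φ i)).1 a
    fun y _ => mul_nonneg ha.le (hQ.1 y)
  have hmass : ∑ i, ∑ y ∈ D i, Q y ≤ 1 :=
    hQ.2 ▸ sum_sum_le_sum_of_pairwise_disjoint D hdisj Q hQ.1
  have hsuccess := one_sub_average_one_sub fun i => ∑ y ∈ D i, V (φ i) y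
  rw [Fintype.card_fin] at hsuccess
  rw [hsuccess, div_eq_mul_one_div a, mul_comm a, ← mul_add]
  gcongr
  calc ∑ i, ∑ y ∈ D i, V (φ i) y
      ≤ ∑ i, (a * ∑ y ∈ D i, Q y +
          ∑ y ∈ univ.filter (fun y => a * Q y ≤ V (φ i) y), V (φ i) y) :=
        sum_le_sum fun i _ => hsplit i
    _ = a * ∑ i, ∑ y ∈ D i, Q y +
          ∑ i, ∑ y ∈ univ.filter (fun y => a * Q y ≤ V (φ i) y), V (φ i) y := by
        rw [sum_add_distrib, mul_sum]
    _ ≤ a + ∑ i, ∑ y ∈ univ.filter (fun y => a * Q y ≤ V (φ i) y), V (φ i) y := by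
        gcongr
        exact mul_le_of_le_one_right ha.le hmass
end

section
/- Let X and Y be finite sets, V : X → PMF(Y) a channel, P a probability distribution on X, N ≥ 1 an integer, and c > 0. For a codebook z = (z₁,…,z_N) ∈ X^N define decoding sets inductively by D_i(z) = { y : V_{z_i}(y) > c·V_P(y) } \ (D_1(z) ∪ … ∪ D_{i−1}(z)), and let P_e(z) = (1/N) Σ_{i=1}^N (1 − V_{z_i}(D_i(z))). Then the expectation of P_e(z) when z₁,…,z_N are drawn i.i.d. from P satisfies E_{z∼P^{⊗N}}[P_e(z)] ≤ Σ_x P(x) · V_x{ y : V_x(y) ≤ c·V_P(y) } + N/(2c). -/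
open scoped BigOperators Classical

/-- Output distribution `V_P`. -/
noncomputable def outDist {A B : Type} [Fintype A] (P : A → ℝ) (V : A → B → ℝ) (y : B) : ℝ :=
  ∑ x, P x * V x y

/-- Inductive removal of earlier sets: `decAux A i = A i \ (decAux A 0 ∪ ⋯ ∪ decAux A (i-1))`. -/
noncomputable def decAux {Y : Type} (A : ℕ → Finset Y) : ℕ → Finset Y
  | i => A i \ (Finset.range i).attach.biUnion (fun j => decAux A j.1)
  decreasing_by exact Finset.mem_range.mp j.2

/-- The decoding sets of the threshold decoder:
`D_i(z) = { y : V_{z_i}(y) > c·V_P(y) } \ (D_1(z) ∪ ⋯ ∪ D_{i-1}(z))`. -/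
noncomputable def decSet {X Y : Type} [Fintype X] [Fintype Y]
    (V : X → Y → ℝ) (P : X → ℝ) (c : ℝ) {N : ℕ} (z : Fin N → X) (i : Fin N) : Finset Y :=
  decAux (fun j =>
    if h : j < N then
      Finset.univ.filter (fun y => c * outDist P V y < V (z ⟨j, h⟩) y)
    else ∅) i.1

/-- Average error probability of the codebook `z` with the threshold decoder. -/
noncomputable def PeRC {X Y : Type} [Fintype X] [Fintype Y]
    (V : X → Y → ℝ) (P : X → ℝ) (c : ℝ) {N : ℕ} (z : Fin N → X) : ℝ :=
  (1 / (N : ℝ)) * ∑ i, (1 - ∑ y ∈ decSet V P c z i, V (z i) y)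

/-! A codeword `z i` is decoded wrongly only if the output lies in its bad set
`{y : V_{z_i}(y) ≤ c·V_P(y)}` or in an earlier decoding set `D_j`, `j < i`. The first event
averages to `Σ_x P(x) V_x(bad)`. The set `D_j` depends only on `z_1, …, z_j`, hence is independent
of `z_i`, so averaging over `z_i` turns `V_{z_i}(D_j)` into `V_P(D_j)`, which is at most `1/c`
because `V_P < V_{z_j}/c` on `D_j`. Averaging the resulting `i/c` over `i < N` gives `N/(2c)`. -/

open Finset Function

section DecAux

variable {Y : Type} (A : ℕ → Finset Y)

lemma decAux_subset (i : ℕ) : decAux A i ⊆ A i := by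
  rw [decAux]
  exact sdiff_subset

lemma decAux_congr {A' : ℕ → Finset Y} {i : ℕ} (h : ∀ k ≤ i, A k = A' k) :
    decAux A i = decAux A' i := by
  induction i using Nat.strong_induction_on with
  | _ i ih =>
    rw [decAux, decAux, h i le_rfl]
    congr 1
    refine biUnion_congr rfl fun j _ => ?_
    have hj := mem_range.mp j.2
    exact ih j hj fun k hk => h k (hk.trans hj.le)

lemma decAux_disjoint {j k : ℕ} (hjk : j < k) : Disjoint (decAux A j) (decAux A k) := by
  refine disjoint_left.mpr fun y hyj hyk => ?_
  rw [decAux] at hyk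
  exact (mem_sdiff.mp hyk).2 (mem_biUnion.mpr ⟨⟨j, mem_range.mpr hjk⟩, mem_attach _ _, hyj⟩)

lemma sum_le_sum_decAux_add_sum_range {μ : Y → ℝ} (hμ : ∀ y, 0 ≤ μ y) (i : ℕ) :
    ∑ y ∈ A i, μ y ≤ ∑ y ∈ decAux A i, μ y + ∑ j ∈ range i, ∑ y ∈ decAux A j, μ y := by
  set B := (range i).attach.biUnion fun j => decAux A j.1
  have hcover : A i ⊆ decAux A i ∪ B := by
    intro y hy
    rw [decAux, mem_union, mem_sdiff]
    tauto
  have hB : ∑ y ∈ B, μ y = ∑ j ∈ range i, ∑ y ∈ decAux A j, μ y := by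
    rw [sum_biUnion, sum_attach (range i) fun j => ∑ y ∈ decAux A j, μ y]
    intro j _ k _ hjk
    rcases lt_or_gt_of_ne (Subtype.coe_ne_coe.mpr hjk) with h | h
    · exact decAux_disjoint A h
    · exact (decAux_disjoint A h).symm
  calc ∑ y ∈ A i, μ y ≤ ∑ y ∈ decAux A i ∪ B, μ y :=
        sum_le_sum_of_subset_of_nonneg hcover fun y _ _ => hμ y
    _ = ∑ y ∈ decAux A i, μ y + ∑ y ∈ B, μ y := by
        rw [decAux]
        exact sum_union sdiff_disjoint
    _ = _ := by rw [hB]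

end DecAux

section ProductDistribution

variable {ι X R : Type*} [Fintype ι] [DecidableEq ι] [CommSemiring R]

lemma sum_prod_eq_one [Fintype X] {P : X → R} (hP : ∑ x, P x = 1) :
    ∑ z : ι → X, ∏ k, P (z k) = 1 := by
  rw [← Fintype.prod_sum, hP, prod_const_one]

lemma prod_update_mul_apply (f : X → R) (z : ι → X) (i : ι) (x : X) :
    (∏ k, f (update z i x k)) * f (z i) = (∏ k, f (z k)) * f x := by
  rw [Fintype.prod_eq_mul_prod_compl i, Fintype.prod_eq_mul_prod_compl i, update_self]
  have hcompl : ∏ k ∈ {i}ᶜ, f (update z i x k) = ∏ k ∈ {i}ᶜ, f (z k) :=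
    prod_congr rfl fun k hk => by rw [update_of_ne (by simpa using hk)]
  rw [hcompl]
  ring

/-- Swapping `z i` with a fresh sample `x` is an involution of `(ι → X) × X` that preserves the
product weight. -/
lemma sum_prod_mul_mul_of_update_eq [Fintype X] {P : X → R} (hP : ∑ x, P x = 1) (i : ι)
    (g : X → R) {h : (ι → X) → R} (hh : ∀ z x, h (update z i x) = h z) :
    ∑ z : ι → X, (∏ k, P (z k)) * (g (z i) * h z) =
      (∑ x, P x * g x) * ∑ z : ι → X, (∏ k, P (z k)) * h z := by
  let σ : (ι → X) × X → (ι → X) × X := fun p => (update p.1 i p.2, p.1 i)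
  have hσ : Involutive σ := fun p => by simp [σ]
  calc ∑ z : ι → X, (∏ k, P (z k)) * (g (z i) * h z)
      = ∑ p : (ι → X) × X, P p.2 * ((∏ k, P (p.1 k)) * (g (p.1 i) * h p.1)) := by
        rw [Fintype.sum_prod_type]
        simp only [← sum_mul, hP, one_mul]
    _ = ∑ p : (ι → X) × X, P (p.1 i) * ((∏ k, P (update p.1 i p.2 k)) * (g p.2 * h p.1)) :=
        (Equiv.sum_comp hσ.toPerm _).symm.trans (by simp [σ, hh])
    _ = ∑ p : (ι → X) × X, (P p.2 * g p.2) * ((∏ k, P (p.1 k)) * h p.1) := by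
        refine sum_congr rfl fun p _ => ?_
        calc _ = ((∏ k, P (update p.1 i p.2 k)) * P (p.1 i)) * (g p.2 * h p.1) := by ring
          _ = ((∏ k, P (p.1 k)) * P p.2) * (g p.2 * h p.1) := by
            rw [prod_update_mul_apply]
          _ = _ := by ring
    _ = _ := by rw [Fintype.sum_prod_type, sum_comm, sum_mul_sum]

lemma sum_prod_mul_apply [Fintype X] {P : X → R} (hP : ∑ x, P x = 1) (i : ι) (g : X → R) :
    ∑ z : ι → X, (∏ k, P (z k)) * g (z i) = ∑ x, P x * g x := by
  simpa [sum_prod_eq_one hP] using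
    sum_prod_mul_mul_of_update_eq hP i g (h := fun _ => (1 : R)) fun _ _ => rfl

lemma sum_prod_mul_sum_of_update_eq [Fintype X] {Y : Type*} [Fintype Y] {P : X → R}
    (hP : ∑ x, P x = 1) (i : ι) {S : (ι → X) → Finset Y} (hS : ∀ z x, S (update z i x) = S z)
    (g : X → Y → R) :
    ∑ z : ι → X, (∏ k, P (z k)) * ∑ y ∈ S z, g (z i) y =
      ∑ z : ι → X, (∏ k, P (z k)) * ∑ y ∈ S z, ∑ x, P x * g x y := by
  have hind : ∀ z (f : Y → R), ∑ y ∈ S z, f y = ∑ y, f y * if y ∈ S z then 1 else 0 := by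
    intro z f
    simp [mul_ite, sum_ite_mem]
  simp only [hind, mul_sum]
  rw [sum_comm]
  conv_rhs => rw [sum_comm]
  refine sum_congr rfl fun y _ => ?_
  rw [sum_prod_mul_mul_of_update_eq hP i (g · y) (by simp [hS]), mul_sum]
  simp only [mul_left_comm]

end ProductDistribution

section ThresholdDecoder

variable {X Y : Type} [Fintype X] [Fintype Y] {V : X → Y → ℝ} {P : X → ℝ} {c : ℝ} {N : ℕ}

noncomputable def thresholdSet (V : X → Y → ℝ) (P : X → ℝ) (c : ℝ) (z : Fin N → X) (j : ℕ) :
    Finset Y :=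
  if h : j < N then univ.filter fun y => c * outDist P V y < V (z ⟨j, h⟩) y else ∅

lemma decSet_eq_decAux (z : Fin N → X) (i : Fin N) :
    decSet V P c z i = decAux (thresholdSet V P c z) i :=
  rfl

lemma thresholdSet_of_fin (z : Fin N → X) (i : Fin N) :
    thresholdSet V P c z i = univ.filter fun y => c * outDist P V y < V (z i) y :=
  dif_pos i.2

lemma decSet_subset (z : Fin N → X) (i : Fin N) :
    decSet V P c z i ⊆ univ.filter fun y => c * outDist P V y < V (z i) y := by
  rw [decSet_eq_decAux, ← thresholdSet_of_fin]
  exact decAux_subset _ _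

lemma decSet_update_of_lt {i j : Fin N} (hji : j < i) (z : Fin N → X) (x : X) :
    decSet V P c (update z i x) j = decSet V P c z j := by
  rw [decSet_eq_decAux, decSet_eq_decAux]
  refine decAux_congr _ fun k hk => ?_
  unfold thresholdSet
  split_ifs with hkN
  · have hki : (⟨k, hkN⟩ : Fin N) ≠ i := (Fin.lt_of_le_of_lt hk hji).ne
    rw [update_of_ne hki]
  · rfl

lemma sum_outDist_decSet_le (hV : IsChannel V) (hc : 0 < c) (z : Fin N → X) (i : Fin N) :
    ∑ y ∈ decSet V P c z i, outDist P V y ≤ 1 / c := by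
  have hV1 : ∑ y ∈ decSet V P c z i, V (z i) y ≤ 1 := by
    rw [← (hV (z i)).2]
    exact sum_le_sum_of_subset_of_nonneg (subset_univ _) fun y _ _ => (hV (z i)).1 y
  rw [le_div_iff₀ hc, sum_mul]
  calc ∑ y ∈ decSet V P c z i, outDist P V y * c ≤ ∑ y ∈ decSet V P c z i, V (z i) y :=
        sum_le_sum fun y hy => by
          rw [mul_comm]
          exact (mem_filter.mp (decSet_subset z i hy)).2.le
    _ ≤ 1 := hV1

lemma one_sub_sum_decSet_le (hV : IsChannel V) (z : Fin N → X) (i : Fin N) :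
    1 - ∑ y ∈ decSet V P c z i, V (z i) y ≤
      ∑ y ∈ univ.filter (fun y => V (z i) y ≤ c * outDist P V y), V (z i) y +
        ∑ j ∈ Iio i, ∑ y ∈ decSet V P c z j, V (z i) y := by
  have hsplit : ∑ y ∈ univ.filter (fun y => c * outDist P V y < V (z i) y), V (z i) y +
      ∑ y ∈ univ.filter (fun y => V (z i) y ≤ c * outDist P V y), V (z i) y = 1 := by
    simp_rw [← not_lt, sum_filter_add_sum_filter_not]
    exact (hV (z i)).2
  have hthreshold := sum_le_sum_decAux_add_sum_range (thresholdSet V P c z) (hV (z i)).1 i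
  have hprev : ∑ j ∈ Iio i, ∑ y ∈ decSet V P c z j, V (z i) y =
      ∑ j ∈ range i, ∑ y ∈ decAux (thresholdSet V P c z) j, V (z i) y := by
    rw [← Nat.Iio_eq_range, ← Fin.map_valEmbedding_Iio, sum_map]
    rfl
  rw [thresholdSet_of_fin, ← decSet_eq_decAux, ← hprev] at hthreshold
  linarith

lemma sum_prod_mul_sum_decSet_le (hV : IsChannel V) (hP : IsDist P) (hc : 0 < c)
    {i j : Fin N} (hji : j < i) :
    ∑ z : Fin N → X, (∏ k, P (z k)) * ∑ y ∈ decSet V P c z j, V (z i) y ≤ 1 / c := by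
  rw [sum_prod_mul_sum_of_update_eq hP.2 i (decSet_update_of_lt hji) V]
  calc ∑ z : Fin N → X, (∏ k, P (z k)) * ∑ y ∈ decSet V P c z j, ∑ x, P x * V x y
      ≤ ∑ z : Fin N → X, (∏ k, P (z k)) * (1 / c) :=
        sum_le_sum fun z _ => mul_le_mul_of_nonneg_left (sum_outDist_decSet_le hV hc z j)
          (prod_nonneg fun k _ => hP.1 (z k))
    _ = 1 / c := by rw [← sum_mul, sum_prod_eq_one hP.2, one_mul]

lemma sum_prod_mul_one_sub_sum_decSet_le (hV : IsChannel V) (hP : IsDist P) (hc : 0 < c)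
    (i : Fin N) :
    ∑ z : Fin N → X, (∏ k, P (z k)) * (1 - ∑ y ∈ decSet V P c z i, V (z i) y) ≤
      ∑ x, P x * ∑ y ∈ univ.filter (fun y => V x y ≤ c * outDist P V y), V x y + i / c := by
  calc ∑ z : Fin N → X, (∏ k, P (z k)) * (1 - ∑ y ∈ decSet V P c z i, V (z i) y)
      ≤ ∑ z : Fin N → X, (∏ k, P (z k)) *
          (∑ y ∈ univ.filter (fun y => V (z i) y ≤ c * outDist P V y), V (z i) y +
            ∑ j ∈ Iio i, ∑ y ∈ decSet V P c z j, V (z i) y) :=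
        sum_le_sum fun z _ => mul_le_mul_of_nonneg_left (one_sub_sum_decSet_le hV z i)
          (prod_nonneg fun k _ => hP.1 (z k))
    _ = ∑ x, P x * ∑ y ∈ univ.filter (fun y => V x y ≤ c * outDist P V y), V x y +
          ∑ j ∈ Iio i, ∑ z : Fin N → X, (∏ k, P (z k)) * ∑ y ∈ decSet V P c z j, V (z i) y := by
        simp only [mul_add, sum_add_distrib, sum_prod_mul_apply hP.2 i fun x =>
          ∑ y ∈ univ.filter (fun y => V x y ≤ c * outDist P V y), V x y]
        simp only [mul_sum]
        rw [sum_comm (s := univ)]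
    _ ≤ _ := by
        grw [sum_le_sum fun j hj => sum_prod_mul_sum_decSet_le hV hP hc (mem_Iio.mp hj)]
        rw [sum_const, Fin.card_Iio, nsmul_eq_mul, mul_one_div]

end ThresholdDecoder

lemma sum_fin_val_le_sq_div_two (N : ℕ) : ∑ i : Fin N, (i : ℝ) ≤ N ^ 2 / 2 := by
  rw [Fin.sum_univ_eq_sum_range (fun i => (i : ℝ)) N]
  induction N with
  | zero => simp
  | succ n ih =>
    rw [sum_range_succ]
    push_cast
    linarith

/-- Random coding bound: the expected average error probability over codebooks drawn
i.i.d. from `P` is at most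
`Σ_x P(x) V_x{ y : V_x(y) ≤ c·V_P(y) } + N/(2c)`. -/
theorem random_coding_bound
    {X Y : Type} [Fintype X] [Fintype Y]
    (V : X → Y → ℝ) (hV : IsChannel V)
    (P : X → ℝ) (hP : IsDist P)
    (N : ℕ) (hN : 1 ≤ N) (c : ℝ) (hc : 0 < c) :
    ∑ z : Fin N → X, (∏ i, P (z i)) * PeRC V P c z ≤
      (∑ x, P x * ∑ y ∈ Finset.univ.filter (fun y => V x y ≤ c * outDist P V y), V x y) +
        N / (2 * c) := by
  set T := ∑ x, P x * ∑ y ∈ univ.filter (fun y => V x y ≤ c * outDist P V y), V x y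
  have hNpos : (0 : ℝ) < N := by exact_mod_cast hN
  calc ∑ z : Fin N → X, (∏ i, P (z i)) * PeRC V P c z
      = 1 / N * ∑ i : Fin N, ∑ z : Fin N → X,
          (∏ k, P (z k)) * (1 - ∑ y ∈ decSet V P c z i, V (z i) y) := by
        simp only [PeRC, mul_sum]
        rw [sum_comm]
        exact sum_congr rfl fun i _ => sum_congr rfl fun z _ => by ring
    _ ≤ 1 / N * ∑ i : Fin N, (T + i / c) := by
        gcongr with i
        exact sum_prod_mul_one_sub_sum_decSet_le hV hP hc i
    _ ≤ T + N / (2 * c) := by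
        rw [sum_add_distrib, sum_const, card_univ, Fintype.card_fin, nsmul_eq_mul, ← sum_div]
        have := sum_fin_val_le_sq_div_two N
        rw [mul_add, ← mul_assoc, one_div_mul_cancel hNpos.ne', one_mul, add_le_add_iff_left,
          one_div_mul_eq_div, div_div, div_le_div_iff₀ (by positivity) (by positivity)]
        nlinarith
end
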